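/- arXiv:2001.00046 — 3 statements merged into one kernel-verified Lean document; each statement's English description precedes it below -/
import Mathlib

section
/- (Truncated t-SVDM dominates truncated HOSVD.) In the setting of the previous statement (A an m×p×n real tensor, orthogonal Q, W, Z, truncation indices k₁ ≤ m, k₂ ≤ p, k₃ ≤ n, M := Zᵀ, and A_𝐤 := A ×₁ (Q₁ * Q₁ᵀ) ×₂ (W₁ * W₁ᵀ) ×₃ (Z₁ * Z₁ᵀ)), let κ := min(k₁, k₂). Then: (1) there exist an m×κ×n real tensor X and a κ×p×n real tensor Y with A_𝐤 = X ⋆_M Y; (2) if moreover A = U ⋆_M S ⋆_M Vᵀ is a t-SVDM of A under ⋆_M and A_κ is its t-rank-κ truncation, then ‖A − A_κ‖_F ≤ ‖A − A_𝐤‖_F. -/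
open scoped BigOperators ComplexConjugate Matrix

noncomputable section

variable {R : Type*}

/-- Mode-3 product of a third-order tensor (encoded by its frontal slices)
with a transform matrix: `(A ×₃ M) i = ∑ j, (M i j) • (A j)`. -/
def mode3 [RCLike R] {ι α β : Type*} [Fintype ι]
    (A : ι → Matrix α β R) (M : Matrix ι ι R) : ι → Matrix α β R :=
  fun i => ∑ j, M i j • A j

/-- Frobenius (entrywise ℓ²) norm of a matrix. -/
def fnorm [RCLike R] {α β : Type*} [Fintype α] [Fintype β] (A : Matrix α β R) : ℝ :=
  Real.sqrt (∑ a, ∑ b, ‖A a b‖ ^ 2)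

/-- Frobenius norm of a tensor: `‖A‖² = ∑ i, ‖A i‖²`. -/
def tnorm [RCLike R] {ι α β : Type*} [Fintype ι] [Fintype α] [Fintype β]
    (A : ι → Matrix α β R) : ℝ :=
  Real.sqrt (∑ i, fnorm (A i) ^ 2)

/-- The ⋆_M product: facewise product in the transform domain, then inverse transform. -/
def tprodM [RCLike R] {ι m p q : Type*} [Fintype ι] [DecidableEq ι] [Fintype p]
    (M : Matrix ι ι R) (A : ι → Matrix m p R) (B : ι → Matrix p q R) :
    ι → Matrix m q R :=
  mode3 (fun i => mode3 A M i * mode3 B M i) M⁻¹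

/-- Conjugate transpose of a tensor under ⋆_M. -/
def tconj [RCLike R] {ι m p : Type*} [Fintype ι] [DecidableEq ι]
    (M : Matrix ι ι R) (A : ι → Matrix m p R) : ι → Matrix p m R :=
  mode3 (fun i => (mode3 A M i)ᴴ) M⁻¹

/-- The identity tensor under ⋆_M. -/
def tId [RCLike R] (m : Type*) [DecidableEq m] {ι : Type*} [Fintype ι] [DecidableEq ι]
    (M : Matrix ι ι R) : ι → Matrix m m R :=
  mode3 (fun _ => (1 : Matrix m m R)) M⁻¹

/-- A square tensor `Q` is ⋆_M-unitary if `Qᴴ ⋆_M Q = Q ⋆_M Qᴴ = I`. -/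
def tUnitary [RCLike R] {ι m : Type*} [Fintype ι] [DecidableEq ι] [Fintype m] [DecidableEq m]
    (M : Matrix ι ι R) (Q : ι → Matrix m m R) : Prop :=
  tprodM M (tconj M Q) Q = tId m M ∧ tprodM M Q (tconj M Q) = tId m M

/-- A t-SVDM of `A`: a factorization `A = U ⋆_M S ⋆_M Vᴴ` with `U`, `V` ⋆_M-unitary and every
transform-domain slice `Ŝ i` diagonal with real, nonnegative, nonincreasing diagonal entries. -/
def IsTSVDM [RCLike R] {m p n : ℕ} (M : Matrix (Fin n) (Fin n) R)
    (A : Fin n → Matrix (Fin m) (Fin p) R)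
    (U : Fin n → Matrix (Fin m) (Fin m) R)
    (S : Fin n → Matrix (Fin m) (Fin p) R)
    (V : Fin n → Matrix (Fin p) (Fin p) R) : Prop :=
  A = tprodM M (tprodM M U S) (tconj M V) ∧
  tUnitary M U ∧ tUnitary M V ∧
  (∀ (i : Fin n) (a : Fin m) (b : Fin p), (a : ℕ) ≠ (b : ℕ) → mode3 S M i a b = 0) ∧
  (∀ (i : Fin n) (a : Fin m) (b : Fin p), (a : ℕ) = (b : ℕ) →
      ∃ r : ℝ, 0 ≤ r ∧ mode3 S M i a b = (r : R)) ∧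
  (∀ (i : Fin n) (a a' : Fin m) (b b' : Fin p), (a : ℕ) = (b : ℕ) → (a' : ℕ) = (b' : ℕ) →
      (a : ℕ) ≤ (a' : ℕ) →
      RCLike.re (mode3 S M i a' b') ≤ RCLike.re (mode3 S M i a b))

/-- Transform-domain slice of a truncation:
(first k columns of Û) * (leading k×k block of Ŝ) * (first k columns of V̂)ᴴ. -/
def truncSlice [RCLike R] {m p : ℕ} (k : ℕ) (Uh : Matrix (Fin m) (Fin m) R)
    (Sh : Matrix (Fin m) (Fin p) R) (Vh : Matrix (Fin p) (Fin p) R) :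
    Matrix (Fin m) (Fin p) R :=
  Matrix.of fun a b =>
    ∑ j : Fin m, ∑ l : Fin p,
      if (j : ℕ) < k ∧ (l : ℕ) < k then Uh a j * Sh j l * star (Vh b l) else 0

/-- The multi-rank-ρ truncation of a t-SVDM (use `ρ = fun _ => k` for the t-rank-k truncation). -/
def truncTensor [RCLike R] {m p n : ℕ} (M : Matrix (Fin n) (Fin n) R)
    (U : Fin n → Matrix (Fin m) (Fin m) R) (S : Fin n → Matrix (Fin m) (Fin p) R)
    (V : Fin n → Matrix (Fin p) (Fin p) R) (ρ : Fin n → ℕ) :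
    Fin n → Matrix (Fin m) (Fin p) R :=
  mode3 (fun i => truncSlice (ρ i) (mode3 U M i) (mode3 S M i) (mode3 V M i)) M⁻¹

/-- The permuted tensor `Aᴾ`: `(Aᴾ c) i j = (A i) c j`. -/
def tperm [RCLike R] {m p n : ℕ} (A : Fin n → Matrix (Fin m) (Fin p) R) :
    Fin m → Matrix (Fin n) (Fin p) R :=
  fun c => Matrix.of fun i j => A i c j

/-!
With `M = Zᵀ` orthogonal, `A ↦ A ×₃ M` preserves the Frobenius norm and turns `⋆_M` into the
facewise product of the transformed slices `Â i`, so both claims reduce to matrices.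

(1) Every slice of `A_𝐤` is `Q₁ Q₁ᵀ (·) W₁ W₁ᵀ`, so it factors through `Q₁` (inner size `k₁`) and
through `W₁ᵀ` (inner size `k₂`).

(2) In the transform domain the slices of `A_𝐤` are `P Â i N` (`P = Q₁Q₁ᵀ`, `N = W₁W₁ᵀ`) for
`i < k₃` and `0` otherwise, while those of `A_κ` are the rank-`κ` truncated SVDs of
`Â i = Û Ŝ V̂ᵀ`, whose error is the energy of `Ŝ` outside its leading `κ × κ` block. By
Pythagoras, `‖Â − P Â N‖² = ‖Ŝ‖² − ‖E Ŝ Fᵀ‖²` with `E = Q₁ᵀ Û`, `F = W₁ᵀ V̂` having orthonormal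
rows, and `‖E Ŝ Fᵀ‖² ≤ ‖Ŝ Fᵀ‖² = ∑ₗ ‖F eₗ‖² σₗ²` weights the `σₗ²` by numbers in `[0, 1]` of total
`k₂`, so it is at most the sum of the `k₂` largest `σₗ²`; transposing gives the same with `k₁`.
-/

open Matrix

section TransformDomain

variable [RCLike R] {ι α β : Type*} [Fintype ι]

lemma mode3_mode3 (A : ι → Matrix α β R) (M N : Matrix ι ι R) :
    mode3 (mode3 A N) M = mode3 A (M * N) := by
  funext i
  simp only [mode3, Finset.smul_sum, smul_smul, mul_apply, Finset.sum_smul]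
  exact Finset.sum_comm

lemma mode3_one [DecidableEq ι] (A : ι → Matrix α β R) : mode3 A 1 = A := by
  funext i
  simp [mode3, one_apply, ite_smul]

lemma mode3_diagonal [DecidableEq ι] (A : ι → Matrix α β R) (d : ι → R) (i : ι) :
    mode3 A (diagonal d) i = d i • A i := by
  simp [mode3, diagonal_apply, ite_smul]

lemma mode3_sub (A B : ι → Matrix α β R) (M : Matrix ι ι R) (i : ι) :
    mode3 (fun j => A j - B j) M i = mode3 A M i - mode3 B M i := by
  simp [mode3, smul_sub]

lemma mode3_mul_left {γ : Type*} [Fintype α] (L : Matrix γ α R) (B : ι → Matrix α β R)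
    (M : Matrix ι ι R) (i : ι) : mode3 (fun j => L * B j) M i = L * mode3 B M i := by
  simp [mode3, Matrix.mul_sum, Matrix.mul_smul]

lemma mode3_mul_right {γ : Type*} [Fintype β] (B : ι → Matrix α β R) (N : Matrix β γ R)
    (M : Matrix ι ι R) (i : ι) : mode3 (fun j => B j * N) M i = mode3 B M i * N := by
  simp [mode3, Matrix.sum_mul, Matrix.smul_mul]

variable [DecidableEq ι] {M : Matrix ι ι R}

lemma mode3_mode3_inv (hM : IsUnit M.det) (A : ι → Matrix α β R) : mode3 (mode3 A M⁻¹) M = A := by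
  rw [mode3_mode3, mul_nonsing_inv M hM, mode3_one]

lemma mode3_inv_mode3 (hM : IsUnit M.det) (A : ι → Matrix α β R) : mode3 (mode3 A M) M⁻¹ = A := by
  rw [mode3_mode3, nonsing_inv_mul M hM, mode3_one]

lemma mode3_tprodM [Fintype β] (hM : IsUnit M.det) (X : ι → Matrix α β R) {γ : Type*}
    (Y : ι → Matrix β γ R) (i : ι) : mode3 (tprodM M X Y) M i = mode3 X M i * mode3 Y M i := by
  rw [tprodM, mode3_mode3_inv hM]

lemma mode3_tconj (hM : IsUnit M.det) (X : ι → Matrix α β R) (i : ι) :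
    mode3 (tconj M X) M i = (mode3 X M i)ᴴ := by
  rw [tconj, mode3_mode3_inv hM]

lemma mode3_tId [DecidableEq α] (hM : IsUnit M.det) (i : ι) : mode3 (tId α M) M i = 1 := by
  rw [tId, mode3_mode3_inv hM]

lemma tUnitary.mode3_mem_unitaryGroup [Fintype α] [DecidableEq α] {Q : ι → Matrix α α R}
    (hQ : tUnitary M Q) (hM : IsUnit M.det) (i : ι) : mode3 Q M i ∈ unitaryGroup α R := by
  have h₁ := congrArg (fun T => mode3 T M i) hQ.1
  have h₂ := congrArg (fun T => mode3 T M i) hQ.2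
  simp only [mode3_tprodM hM, mode3_tconj hM, mode3_tId hM] at h₁ h₂
  exact ⟨h₁, h₂⟩

lemma exists_tprodM_mul_left [Fintype β] (hM : IsUnit M.det) {γ : Type*} (L : Matrix α β R)
    (B : ι → Matrix β γ R) :
    ∃ (X : ι → Matrix α β R) (Y : ι → Matrix β γ R), (fun i => L * B i) = tprodM M X Y := by
  refine ⟨mode3 (fun _ => L) M⁻¹, mode3 (mode3 B M) M⁻¹, ?_⟩
  conv_lhs => rw [← mode3_inv_mode3 hM (fun i => L * B i)]
  rw [tprodM, mode3_mode3_inv hM, mode3_mode3_inv hM]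
  exact congrArg (mode3 · M⁻¹) (funext (mode3_mul_left L B M))

lemma exists_tprodM_mul_right [Fintype β] (hM : IsUnit M.det) {γ : Type*}
    (B : ι → Matrix α β R) (L : Matrix β γ R) :
    ∃ (X : ι → Matrix α β R) (Y : ι → Matrix β γ R), (fun i => B i * L) = tprodM M X Y := by
  refine ⟨mode3 (mode3 B M) M⁻¹, mode3 (fun _ => L) M⁻¹, ?_⟩
  conv_lhs => rw [← mode3_inv_mode3 hM (fun i => B i * L)]
  rw [tprodM, mode3_mode3_inv hM, mode3_mode3_inv hM]
  exact congrArg (mode3 · M⁻¹) (funext (mode3_mul_right B L M))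

lemma exists_tprodM_min_of_mul_mul [Fintype β] {γ δ : Type*} [Fintype γ] {k₁ k₂ : ℕ}
    (hM : IsUnit M.det) (L₁ : Matrix α (Fin k₁) R) (L₂ : Matrix (Fin k₁) β R)
    (B : ι → Matrix β γ R) (N₁ : Matrix γ (Fin k₂) R) (N₂ : Matrix (Fin k₂) δ R) :
    ∃ (X : ι → Matrix α (Fin (min k₁ k₂)) R) (Y : ι → Matrix (Fin (min k₁ k₂)) δ R),
      (fun i => L₁ * L₂ * B i * (N₁ * N₂)) = tprodM M X Y := by
  rcases le_total k₁ k₂ with h | h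
  · rw [min_eq_left h]
    simpa only [Matrix.mul_assoc] using exists_tprodM_mul_left hM L₁ fun i => L₂ * B i * (N₁ * N₂)
  · rw [min_eq_right h]
    simpa only [Matrix.mul_assoc] using exists_tprodM_mul_right hM (fun i => L₁ * L₂ * B i * N₁) N₂

end TransformDomain

lemma mode3_truncTensor [RCLike R] {m p n : ℕ} {M : Matrix (Fin n) (Fin n) R}
    (hM : IsUnit M.det) (U : Fin n → Matrix (Fin m) (Fin m) R)
    (S : Fin n → Matrix (Fin m) (Fin p) R)
    (V : Fin n → Matrix (Fin p) (Fin p) R) (ρ : Fin n → ℕ) (i : Fin n) :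
    mode3 (truncTensor M U S V ρ) M i =
      truncSlice (ρ i) (mode3 U M i) (mode3 S M i) (mode3 V M i) := by
  rw [truncTensor, mode3_mode3_inv hM]

lemma transpose_mul_mul_transpose_eq_one {α β γ : Type*} [Fintype α] [Fintype γ]
    [DecidableEq α] [DecidableEq β] {A : Matrix α β ℝ} (hA : Aᵀ * A = 1) {U : Matrix α γ ℝ}
    (hU : U * Uᵀ = 1) : Aᵀ * U * (Aᵀ * U)ᵀ = 1 := by
  rw [transpose_mul, transpose_transpose, Matrix.mul_assoc, ← Matrix.mul_assoc U, hU,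
    Matrix.one_mul, hA]

lemma mul_transpose_mul_mul_transpose_self {α β : Type*} [Fintype α] [Fintype β]
    [DecidableEq β] {A : Matrix α β ℝ} (hA : Aᵀ * A = 1) : A * Aᵀ * (A * Aᵀ) = A * Aᵀ := by
  rw [Matrix.mul_assoc, ← Matrix.mul_assoc Aᵀ, hA, Matrix.one_mul]

def colSq {α β : Type*} [Fintype α] (X : Matrix α β ℝ) (b : β) : ℝ := ∑ a, X a b ^ 2

lemma colSq_nonneg {α β : Type*} [Fintype α] (X : Matrix α β ℝ) (b : β) : 0 ≤ colSq X b := by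
  unfold colSq; positivity

section FrobeniusSq

variable {α β γ : Type*} [Fintype α] [Fintype β] [Fintype γ]

def frobSq (X : Matrix α β ℝ) : ℝ := ∑ a, ∑ b, X a b ^ 2

lemma frobSq_nonneg (X : Matrix α β ℝ) : 0 ≤ frobSq X := by
  unfold frobSq; positivity

lemma fnorm_sq (X : Matrix α β ℝ) : fnorm X ^ 2 = frobSq X := by
  simp only [fnorm, Real.norm_eq_abs, sq_abs]
  exact Real.sq_sqrt (frobSq_nonneg X)

lemma frobSq_eq_trace (X : Matrix α β ℝ) : frobSq X = trace (Xᵀ * X) := by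
  simp only [frobSq, trace, diag, mul_apply, transpose_apply, sq]
  exact Finset.sum_comm

lemma frobSq_transpose (X : Matrix α β ℝ) : frobSq Xᵀ = frobSq X :=
  Finset.sum_comm

lemma frobSq_mul_of_transpose_mul_self [DecidableEq β] {U : Matrix α β ℝ} (hU : Uᵀ * U = 1)
    (B : Matrix β γ ℝ) : frobSq (U * B) = frobSq B := by
  rw [frobSq_eq_trace, frobSq_eq_trace, transpose_mul, Matrix.mul_assoc, ← Matrix.mul_assoc Uᵀ,
    hU, Matrix.one_mul]

lemma frobSq_mul_transpose_of_transpose_mul_self [DecidableEq γ] {V : Matrix β γ ℝ}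
    (hV : Vᵀ * V = 1) (B : Matrix α γ ℝ) : frobSq (B * Vᵀ) = frobSq B := by
  rw [← frobSq_transpose, transpose_mul, transpose_transpose,
    frobSq_mul_of_transpose_mul_self hV, frobSq_transpose]

lemma frobSq_mul_le_of_mul_transpose_self [DecidableEq α] [DecidableEq β] {E : Matrix α β ℝ}
    (hE : E * Eᵀ = 1) (B : Matrix β γ ℝ) : frobSq (E * B) ≤ frobSq B := by
  set J : Matrix β β ℝ := 1 - Eᵀ * E
  have hJ : Jᵀ * J = J := by
    have hEE := mul_transpose_mul_mul_transpose_self (A := Eᵀ) (by rwa [transpose_transpose])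
    rw [transpose_transpose] at hEE
    simp only [J, transpose_sub, transpose_one, transpose_mul, transpose_transpose, sub_mul,
      mul_sub, Matrix.one_mul, Matrix.mul_one, hEE, sub_self, sub_zero]
  have hsplit : frobSq B = frobSq (E * B) + frobSq (J * B) := by
    have hsum : Eᵀ * E + J = 1 := add_sub_cancel _ _
    rw [frobSq_eq_trace, frobSq_eq_trace, frobSq_eq_trace, transpose_mul, transpose_mul,
      Matrix.mul_assoc Bᵀ Jᵀ, ← Matrix.mul_assoc Jᵀ, hJ, ← trace_add, Matrix.mul_assoc,
      ← Matrix.mul_add, ← Matrix.mul_assoc Eᵀ, ← Matrix.add_mul, hsum, Matrix.one_mul]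
  linarith [frobSq_nonneg (J * B)]

lemma frobSq_sub_proj_mul_proj {P : Matrix α α ℝ} {N : Matrix β β ℝ}
    (hP : Pᵀ * P = P) (hN : N * Nᵀ = N) (X : Matrix α β ℝ) :
    frobSq (X - P * X * N) = frobSq X - frobSq (P * X * N) := by
  set Y := P * X * N
  have hcross : trace (Xᵀ * Y) = trace (Yᵀ * Y) := by
    have hYY : Yᵀ * Y = Nᵀ * (Xᵀ * P * X * N) := by
      simp only [Y, transpose_mul, Matrix.mul_assoc]
      rw [← Matrix.mul_assoc Pᵀ, hP]
    rw [hYY, trace_mul_comm Nᵀ, Matrix.mul_assoc _ N, hN]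
    simp only [Y, Matrix.mul_assoc]
  have hswap : trace (Yᵀ * X) = trace (Xᵀ * Y) := by
    rw [← trace_transpose, transpose_mul, transpose_transpose]
  rw [frobSq_eq_trace, frobSq_eq_trace, frobSq_eq_trace, transpose_sub, Matrix.sub_mul,
    Matrix.mul_sub, Matrix.mul_sub, trace_sub, trace_sub, trace_sub, hswap, hcross]
  ring

lemma colSq_le_one_of_mul_transpose_self [DecidableEq α] [DecidableEq β] {F : Matrix α β ℝ}
    (hF : F * Fᵀ = 1) (l : β) : colSq F l ≤ 1 := by
  have h := frobSq_mul_le_of_mul_transpose_self hF (single l () (1 : ℝ))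
  simpa [frobSq, colSq, single_apply] using h

lemma sum_colSq_of_mul_transpose_self [DecidableEq α] {F : Matrix α β ℝ} (hF : F * Fᵀ = 1) :
    ∑ l, colSq F l = Fintype.card α := by
  have h : ∑ l, colSq F l = frobSq Fᵀ := by simp only [colSq, frobSq, transpose_apply]
  rw [h, frobSq_eq_trace, transpose_transpose, hF, trace_one]

end FrobeniusSq

section OrthogonalTransform

variable {ι α β : Type*} [Fintype ι] [Fintype α] [Fintype β] {M : Matrix ι ι ℝ}

lemma sum_sq_mulVec_of_transpose_mul_self [DecidableEq ι] (hM : Mᵀ * M = 1) (x : ι → ℝ) :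
    ∑ i, (M *ᵥ x) i ^ 2 = ∑ i, x i ^ 2 := by
  simp only [sq]
  change (M *ᵥ x) ⬝ᵥ (M *ᵥ x) = x ⬝ᵥ x
  rw [dotProduct_mulVec, ← mulVec_transpose, mulVec_mulVec, hM, one_mulVec]

lemma sum_frobSq_mode3 [DecidableEq ι] (hM : Mᵀ * M = 1) (C : ι → Matrix α β ℝ) :
    ∑ i, frobSq (mode3 C M i) = ∑ i, frobSq (C i) := by
  have hentry : ∀ i a b, mode3 C M i a b = (M *ᵥ fun j => C j a b) i := by
    intro i a b
    simp [mode3, Matrix.sum_apply, mulVec, dotProduct]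
  simp only [frobSq, hentry]
  rw [Finset.sum_comm]
  conv_rhs => rw [Finset.sum_comm]
  refine Finset.sum_congr rfl fun a _ => ?_
  rw [Finset.sum_comm]
  conv_rhs => rw [Finset.sum_comm]
  exact Finset.sum_congr rfl fun b _ => sum_sq_mulVec_of_transpose_mul_self hM _

lemma tnorm_le_tnorm_of_frobSq_mode3_le [DecidableEq ι] (hM : Mᵀ * M = 1)
    {X Y : ι → Matrix α β ℝ} (h : ∀ i, frobSq (mode3 X M i) ≤ frobSq (mode3 Y M i)) :
    tnorm X ≤ tnorm Y := by
  simp only [tnorm, fnorm_sq]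
  rw [← sum_frobSq_mode3 hM X, ← sum_frobSq_mode3 hM Y]
  exact Real.sqrt_le_sqrt (Finset.sum_le_sum fun i _ => h i)

end OrthogonalTransform

lemma sum_mul_le_sum_ite_lt_of_antitone {p k : ℕ} {d w : Fin p → ℝ} (hd : Antitone d)
    (hd0 : ∀ l, 0 ≤ d l) (hw0 : ∀ l, 0 ≤ w l) (hw1 : ∀ l, w l ≤ 1) (hw : ∑ l, w l ≤ k) :
    ∑ l, w l * d l ≤ ∑ l : Fin p, if (l : ℕ) < k then d l else 0 := by
  -- `T` is the largest discarded value (`0` if nothing is discarded), so termwise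
  -- `(w l - [l < k]) * (d l - T) ≤ 0`.
  set T := if h : k < p then d ⟨k, h⟩ else 0
  have hT0 : 0 ≤ T := by unfold T; split_ifs <;> simp [hd0]
  have hpoint : ∀ l : Fin p, w l * d l - (if (l : ℕ) < k then d l else 0) ≤
      (w l - if (l : ℕ) < k then 1 else 0) * T := by
    intro l
    by_cases hl : (l : ℕ) < k
    · have hTd : T ≤ d l := by
        unfold T; split_ifs with h
        · exact hd (Fin.mk_le_mk.mpr hl.le)
        · exact hd0 l
      simp only [hl, if_true]
      nlinarith [hw1 l]
    · have hk : k < p := by omega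
      have hdT : d l ≤ T := by
        simp only [T, hk, dif_pos]
        exact hd (show (⟨k, hk⟩ : Fin p) ≤ l from Fin.mk_le_mk.mpr (by omega))
      simp only [hl, if_false, sub_zero]
      nlinarith [hw0 l]
  have hcount : ∑ l : Fin p, (if (l : ℕ) < k then (1 : ℝ) else 0) = min p k := by
    rw [Finset.sum_boole, Fin.card_filter_val_lt]
  have hwp : ∑ l, w l ≤ p := (Finset.sum_le_sum fun l _ => hw1 l).trans (by simp)
  have hsum := Finset.sum_le_sum fun l (_ : l ∈ Finset.univ) => hpoint l
  rw [Finset.sum_sub_distrib, ← Finset.sum_mul, Finset.sum_sub_distrib, hcount] at hsum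
  have hmin : ∑ l, w l - ((min p k : ℕ) : ℝ) ≤ 0 := by
    rw [Nat.cast_min]; linarith [le_min hwp hw]
  nlinarith [mul_nonpos_of_nonpos_of_nonneg hmin hT0]

section SingularDiag

variable {m p : ℕ}

/-- The `Σ` factor of a real SVD. -/
structure IsSingularDiag (S : Matrix (Fin m) (Fin p) ℝ) : Prop where
  apply_of_ne : ∀ (j : Fin m) (l : Fin p), (j : ℕ) ≠ l → S j l = 0
  nonneg : ∀ (j : Fin m) (l : Fin p), (j : ℕ) = l → 0 ≤ S j l
  antitone : ∀ (j j' : Fin m) (l l' : Fin p), (j : ℕ) = l → (j' : ℕ) = l' → (j : ℕ) ≤ j' →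
    S j' l' ≤ S j l

def leadingBlock [Zero R] (κ : ℕ) (S : Matrix (Fin m) (Fin p) R) :
    Matrix (Fin m) (Fin p) R :=
  of fun j l => if (j : ℕ) < κ ∧ (l : ℕ) < κ then S j l else 0

lemma IsSingularDiag.transpose {S : Matrix (Fin m) (Fin p) ℝ} (hS : IsSingularDiag S) :
    IsSingularDiag Sᵀ where
  apply_of_ne j l h := hS.apply_of_ne l j (Ne.symm h)
  nonneg j l h := hS.nonneg l j h.symm
  antitone j j' l l' h h' hle := hS.antitone l l' j j' h.symm h'.symm (by omega)

lemma IsSingularDiag.colSq_eq {S : Matrix (Fin m) (Fin p) ℝ} (hS : IsSingularDiag S) (l : Fin p) :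
    colSq S l = if h : (l : ℕ) < m then S ⟨l, h⟩ l ^ 2 else 0 := by
  split_ifs with h
  · refine Finset.sum_eq_single_of_mem _ (Finset.mem_univ _) fun j _ hj => ?_
    rw [hS.apply_of_ne j l fun h' => hj (Fin.ext h'), sq, zero_mul]
  · refine Finset.sum_eq_zero fun j _ => ?_
    rw [hS.apply_of_ne j l (by omega), sq, zero_mul]

lemma IsSingularDiag.colSq_antitone {S : Matrix (Fin m) (Fin p) ℝ} (hS : IsSingularDiag S) :
    Antitone (colSq S) := by
  intro l l' hle
  rw [hS.colSq_eq, hS.colSq_eq]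
  split_ifs with h' h
  · exact pow_le_pow_left₀ (hS.nonneg _ _ rfl) (hS.antitone _ _ _ _ rfl rfl hle) 2
  · omega
  · positivity
  · rfl

lemma truncSlice_eq_mul_leadingBlock [RCLike R] (κ : ℕ) (U : Matrix (Fin m) (Fin m) R)
    (S : Matrix (Fin m) (Fin p) R) (V : Matrix (Fin p) (Fin p) R) :
    truncSlice κ U S V = U * leadingBlock κ S * Vᴴ := by
  ext a b
  simp only [truncSlice, leadingBlock, mul_apply, of_apply, conjTranspose_apply, Finset.sum_mul,
    mul_ite, mul_zero, ite_mul, zero_mul]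
  exact Finset.sum_comm

lemma leadingBlock_transpose [Zero R] (κ : ℕ) (S : Matrix (Fin m) (Fin p) R) :
    (leadingBlock κ S)ᵀ = leadingBlock κ Sᵀ := by
  ext l j
  simp [leadingBlock, and_comm]

lemma frobSq_leadingBlock_add_frobSq_sub (κ : ℕ) (S : Matrix (Fin m) (Fin p) ℝ) :
    frobSq (leadingBlock κ S) + frobSq (S - leadingBlock κ S) = frobSq S := by
  simp only [frobSq, ← Finset.sum_add_distrib]
  refine Finset.sum_congr rfl fun j _ => Finset.sum_congr rfl fun l _ => ?_
  simp only [leadingBlock, Matrix.sub_apply, of_apply]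
  split_ifs <;> ring

lemma IsSingularDiag.frobSq_leadingBlock {S : Matrix (Fin m) (Fin p) ℝ} (hS : IsSingularDiag S)
    (κ : ℕ) : frobSq (leadingBlock κ S) = ∑ l : Fin p, if (l : ℕ) < κ then colSq S l else 0 := by
  rw [frobSq, Finset.sum_comm]
  refine Finset.sum_congr rfl fun l _ => ?_
  split_ifs with hl
  · refine Finset.sum_congr rfl fun j _ => ?_
    by_cases hj : (j : ℕ) = l
    · simp [leadingBlock, hj, hl]
    · simp [leadingBlock, hS.apply_of_ne j l hj]
  · exact Finset.sum_eq_zero fun j _ => by simp [leadingBlock, hl]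

lemma IsSingularDiag.frobSq_mul_transpose {S : Matrix (Fin m) (Fin p) ℝ} (hS : IsSingularDiag S)
    {β : Type*} [Fintype β] (F : Matrix β (Fin p) ℝ) :
    frobSq (S * Fᵀ) = ∑ l, colSq F l * colSq S l := by
  have hrow : ∀ j b, (∑ l, S j l * F b l) ^ 2 = ∑ l, S j l ^ 2 * F b l ^ 2 := by
    intro j b
    rw [sq, Finset.sum_mul_sum]
    refine Finset.sum_congr rfl fun l _ => ?_
    rw [Finset.sum_eq_single_of_mem l (Finset.mem_univ l) fun l' _ hl' => ?_]
    · ring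
    rcases eq_or_ne (j : ℕ) l with h | h
    · rw [hS.apply_of_ne j l' fun h' => hl' (Fin.ext (h'.symm.trans h))]; ring
    · rw [hS.apply_of_ne j l h]; ring
  simp only [frobSq, colSq, mul_apply, transpose_apply, hrow, Finset.sum_mul_sum]
  calc ∑ j, ∑ b, ∑ l, S j l ^ 2 * F b l ^ 2 = ∑ j, ∑ l, ∑ b, S j l ^ 2 * F b l ^ 2 :=
        Finset.sum_congr rfl fun _ _ => Finset.sum_comm
    _ = ∑ l, ∑ j, ∑ b, S j l ^ 2 * F b l ^ 2 := Finset.sum_comm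
    _ = ∑ l, ∑ b, ∑ j, F b l ^ 2 * S j l ^ 2 := by
        refine Finset.sum_congr rfl fun _ _ => ?_
        rw [Finset.sum_comm]
        simp only [mul_comm]

lemma IsSingularDiag.frobSq_mul_mul_transpose_le {S : Matrix (Fin m) (Fin p) ℝ}
    (hS : IsSingularDiag S) {α : Type*} [Fintype α] [DecidableEq α] {k : ℕ}
    {E : Matrix α (Fin m) ℝ} (hE : E * Eᵀ = 1) {F : Matrix (Fin k) (Fin p) ℝ} (hF : F * Fᵀ = 1) :
    frobSq (E * S * Fᵀ) ≤ frobSq (leadingBlock k S) := by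
  rw [Matrix.mul_assoc, hS.frobSq_leadingBlock]
  calc frobSq (E * (S * Fᵀ)) ≤ frobSq (S * Fᵀ) := frobSq_mul_le_of_mul_transpose_self hE _
    _ = ∑ l, colSq F l * colSq S l := hS.frobSq_mul_transpose F
    _ ≤ _ := sum_mul_le_sum_ite_lt_of_antitone hS.colSq_antitone (colSq_nonneg S)
          (colSq_nonneg F) (colSq_le_one_of_mul_transpose_self hF)
          (by rw [sum_colSq_of_mul_transpose_self hF, Fintype.card_fin])

lemma IsSingularDiag.frobSq_mul_mul_transpose_le_min {S : Matrix (Fin m) (Fin p) ℝ}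
    (hS : IsSingularDiag S) {k₁ k₂ : ℕ} {E : Matrix (Fin k₁) (Fin m) ℝ} (hE : E * Eᵀ = 1)
    {F : Matrix (Fin k₂) (Fin p) ℝ} (hF : F * Fᵀ = 1) :
    frobSq (E * S * Fᵀ) ≤ frobSq (leadingBlock (min k₁ k₂) S) := by
  rcases le_total k₁ k₂ with h | h
  · rw [min_eq_left h, ← frobSq_transpose, ← frobSq_transpose (leadingBlock _ _),
      leadingBlock_transpose, show (E * S * Fᵀ)ᵀ = F * Sᵀ * Eᵀ by simp [Matrix.mul_assoc]]
    exact hS.transpose.frobSq_mul_mul_transpose_le hF hE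
  · rw [min_eq_right h]
    exact hS.frobSq_mul_mul_transpose_le hE hF

end SingularDiag

section SVD

variable {m p : ℕ}

structure IsSVD (X : Matrix (Fin m) (Fin p) ℝ) (U : Matrix (Fin m) (Fin m) ℝ)
    (S : Matrix (Fin m) (Fin p) ℝ) (V : Matrix (Fin p) (Fin p) ℝ) : Prop where
  left_mem : U ∈ orthogonalGroup (Fin m) ℝ
  right_mem : V ∈ orthogonalGroup (Fin p) ℝ
  diag : IsSingularDiag S
  eq : X = U * S * Vᵀ

variable {X : Matrix (Fin m) (Fin p) ℝ} {U : Matrix (Fin m) (Fin m) ℝ}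
  {S : Matrix (Fin m) (Fin p) ℝ} {V : Matrix (Fin p) (Fin p) ℝ}

lemma IsSVD.frobSq_eq (h : IsSVD X U S V) : frobSq X = frobSq S := by
  rw [h.eq, frobSq_mul_transpose_of_transpose_mul_self
      ((mem_orthogonalGroup_iff' _ _).1 h.right_mem),
    frobSq_mul_of_transpose_mul_self ((mem_orthogonalGroup_iff' _ _).1 h.left_mem)]

lemma IsSVD.frobSq_sub_truncSlice (h : IsSVD X U S V) (κ : ℕ) :
    frobSq (X - truncSlice κ U S V) = frobSq S - frobSq (leadingBlock κ S) := by
  have hsub : X - truncSlice κ U S V = U * (S - leadingBlock κ S) * Vᵀ := by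
    rw [h.eq, truncSlice_eq_mul_leadingBlock, conjTranspose_eq_transpose_of_trivial,
      Matrix.mul_sub, Matrix.sub_mul]
  rw [hsub, frobSq_mul_transpose_of_transpose_mul_self
      ((mem_orthogonalGroup_iff' _ _).1 h.right_mem),
    frobSq_mul_of_transpose_mul_self ((mem_orthogonalGroup_iff' _ _).1 h.left_mem),
    ← frobSq_leadingBlock_add_frobSq_sub κ S]
  ring

lemma IsSVD.frobSq_sub_truncSlice_le (h : IsSVD X U S V) (κ : ℕ) :
    frobSq (X - truncSlice κ U S V) ≤ frobSq X := by
  rw [h.frobSq_sub_truncSlice, h.frobSq_eq]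
  linarith [frobSq_nonneg (leadingBlock κ S)]

lemma IsSVD.frobSq_sub_truncSlice_le_sub_proj (h : IsSVD X U S V) {k₁ k₂ : ℕ}
    {Q₁ : Matrix (Fin m) (Fin k₁) ℝ} (hQ₁ : Q₁ᵀ * Q₁ = 1) {W₁ : Matrix (Fin p) (Fin k₂) ℝ}
    (hW₁ : W₁ᵀ * W₁ = 1) :
    frobSq (X - truncSlice (min k₁ k₂) U S V) ≤ frobSq (X - Q₁ * Q₁ᵀ * X * (W₁ * W₁ᵀ)) := by
  have hP : (Q₁ * Q₁ᵀ)ᵀ * (Q₁ * Q₁ᵀ) = Q₁ * Q₁ᵀ := by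
    rw [transpose_mul, transpose_transpose, mul_transpose_mul_mul_transpose_self hQ₁]
  have hN : W₁ * W₁ᵀ * (W₁ * W₁ᵀ)ᵀ = W₁ * W₁ᵀ := by
    rw [transpose_mul, transpose_transpose, mul_transpose_mul_mul_transpose_self hW₁]
  have hcompress : frobSq (Q₁ * Q₁ᵀ * X * (W₁ * W₁ᵀ)) = frobSq (Q₁ᵀ * U * S * (W₁ᵀ * V)ᵀ) := by
    rw [show Q₁ * Q₁ᵀ * X * (W₁ * W₁ᵀ) = Q₁ * (Q₁ᵀ * U * S * (W₁ᵀ * V)ᵀ) * W₁ᵀ by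
        simp only [h.eq, transpose_mul, transpose_transpose, Matrix.mul_assoc],
      frobSq_mul_transpose_of_transpose_mul_self hW₁, frobSq_mul_of_transpose_mul_self hQ₁]
  rw [h.frobSq_sub_truncSlice, frobSq_sub_proj_mul_proj hP hN, h.frobSq_eq, hcompress]
  have hkept := h.diag.frobSq_mul_mul_transpose_le_min
    (transpose_mul_mul_transpose_eq_one hQ₁ ((mem_orthogonalGroup_iff _ _).1 h.left_mem))
    (transpose_mul_mul_transpose_eq_one hW₁ ((mem_orthogonalGroup_iff _ _).1 h.right_mem))
  linarith

end SVD

lemma IsTSVDM.isSVD_mode3 {m p n : ℕ} {M : Matrix (Fin n) (Fin n) ℝ}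
    {A : Fin n → Matrix (Fin m) (Fin p) ℝ} {U : Fin n → Matrix (Fin m) (Fin m) ℝ}
    {S : Fin n → Matrix (Fin m) (Fin p) ℝ} {V : Fin n → Matrix (Fin p) (Fin p) ℝ}
    (h : IsTSVDM M A U S V) (hM : IsUnit M.det) (i : Fin n) :
    IsSVD (mode3 A M i) (mode3 U M i) (mode3 S M i) (mode3 V M i) := by
  obtain ⟨hA, hU, hV, hoff, hdiag, hanti⟩ := h
  refine ⟨hU.mode3_mem_unitaryGroup hM i, hV.mode3_mem_unitaryGroup hM i,
    ⟨hoff i, fun j l hjl => ?_, hanti i⟩, ?_⟩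
  · obtain ⟨r, hr, he⟩ := hdiag i j l hjl
    simpa [he] using hr
  · rw [hA, mode3_tprodM hM, mode3_tprodM hM, mode3_tconj hM,
      conjTranspose_eq_transpose_of_trivial]

lemma submatrix_id_transpose_mul_self {α β : Type*} [Fintype α] [DecidableEq α] [DecidableEq β]
    {Q : Matrix α α ℝ} (hQ : Qᵀ * Q = 1) {e : β → α} (he : Function.Injective e) :
    (Q.submatrix id e)ᵀ * Q.submatrix id e = 1 := by
  rw [transpose_submatrix, ← submatrix_mul _ _ _ _ _ Function.bijective_id, hQ,
    submatrix_one _ he]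

lemma transpose_mul_submatrix_castLE_mul_transpose {n k : ℕ} {Z : Matrix (Fin n) (Fin n) ℝ}
    (hZ : Zᵀ * Z = 1) (h : k ≤ n) :
    Zᵀ * (Z.submatrix id (Fin.castLE h) * (Z.submatrix id (Fin.castLE h))ᵀ) =
      diagonal (fun i : Fin n => if (i : ℕ) < k then (1 : ℝ) else 0) * Zᵀ := by
  ext i j
  have hcol : ∀ t, (Zᵀ * Z.submatrix id (Fin.castLE h)) i t = if i = Fin.castLE h t then 1 else 0 :=
    fun t => by rw [← one_apply, ← hZ]; rfl
  rw [← Matrix.mul_assoc, mul_apply, diagonal_mul]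
  simp only [hcol, transpose_apply, submatrix_apply, id, ite_mul, one_mul, zero_mul]
  split_ifs with hi
  · rw [Finset.sum_eq_single_of_mem (⟨i, hi⟩ : Fin k) (Finset.mem_univ _)]
    · simp
    · intro t _ ht
      exact if_neg fun h' => ht (Fin.ext (by simp [h']))
  · refine Finset.sum_eq_zero fun t _ => if_neg fun h' => hi ?_
    simp [h']

lemma mode3_mul_mode3_submatrix_castLE_mul {n k : ℕ} {Z : Matrix (Fin n) (Fin n) ℝ}
    (hZ : Zᵀ * Z = 1) (h : k ≤ n) {α β γ δ : Type*} [Fintype β] [Fintype γ] (L : Matrix α β ℝ)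
    (A : Fin n → Matrix β γ ℝ) (N : Matrix γ δ ℝ) (i : Fin n) :
    mode3 (fun j => L * mode3 A (Z.submatrix id (Fin.castLE h) *
      (Z.submatrix id (Fin.castLE h))ᵀ) j * N) Zᵀ i =
      if (i : ℕ) < k then L * mode3 A Zᵀ i * N else 0 := by
  rw [mode3_mul_right, mode3_mul_left, mode3_mode3,
    transpose_mul_submatrix_castLE_mul_transpose hZ h, ← mode3_mode3, mode3_diagonal]
  split_ifs <;> simp

/-- truncated t-SVDM dominates truncated HOSVD: with `M := Zᵀ` and
`κ := min k₁ k₂`, (1) the truncated HOSVD approximation `A_𝐤` factors as `X ⋆_M Y` with inner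
dimension `κ`; (2) if `A = U ⋆_M S ⋆_M Vᵀ` is a t-SVDM, then the t-rank-κ truncation `A_κ`
satisfies `‖A − A_κ‖ ≤ ‖A − A_𝐤‖`. -/
theorem stmt13 {m p n : ℕ} (A : Fin n → Matrix (Fin m) (Fin p) ℝ)
    (Q : Matrix (Fin m) (Fin m) ℝ) (hQ : Q ∈ Matrix.orthogonalGroup (Fin m) ℝ)
    (Wm : Matrix (Fin p) (Fin p) ℝ) (hWm : Wm ∈ Matrix.orthogonalGroup (Fin p) ℝ)
    (Z : Matrix (Fin n) (Fin n) ℝ) (hZ : Z ∈ Matrix.orthogonalGroup (Fin n) ℝ)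
    (k₁ k₂ k₃ : ℕ) (h₁ : k₁ ≤ m) (h₂ : k₂ ≤ p) (h₃ : k₃ ≤ n) :
    let Q₁ := Q.submatrix id (Fin.castLE h₁)
    let W₁ := Wm.submatrix id (Fin.castLE h₂)
    let Z₁ := Z.submatrix id (Fin.castLE h₃)
    let Ak : Fin n → Matrix (Fin m) (Fin p) ℝ :=
      fun i => Q₁ * Q₁ᵀ * mode3 A (Z₁ * Z₁ᵀ) i * (W₁ * W₁ᵀ)ᵀ
    (∃ (X : Fin n → Matrix (Fin m) (Fin (min k₁ k₂)) ℝ)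
       (Y : Fin n → Matrix (Fin (min k₁ k₂)) (Fin p) ℝ),
        Ak = tprodM Zᵀ X Y) ∧
    (∀ (U : Fin n → Matrix (Fin m) (Fin m) ℝ)
       (S : Fin n → Matrix (Fin m) (Fin p) ℝ)
       (V : Fin n → Matrix (Fin p) (Fin p) ℝ),
        IsTSVDM Zᵀ A U S V →
        tnorm (fun i => A i - truncTensor Zᵀ U S V (fun _ => min k₁ k₂) i) ≤
          tnorm (fun i => A i - Ak i)) := by
  intro Q₁ W₁ Z₁ Ak
  have hZZ : Z * Zᵀ = 1 := (mem_orthogonalGroup_iff _ _).1 hZ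
  have hM : IsUnit (Zᵀ).det := isUnit_det_of_left_inverse hZZ
  have hQ₁ : Q₁ᵀ * Q₁ = 1 :=
    submatrix_id_transpose_mul_self ((mem_orthogonalGroup_iff' _ _).1 hQ) (Fin.castLE_injective h₁)
  have hW₁ : W₁ᵀ * W₁ = 1 :=
    submatrix_id_transpose_mul_self ((mem_orthogonalGroup_iff' _ _).1 hWm) (Fin.castLE_injective h₂)
  have hW₁sym : (W₁ * W₁ᵀ)ᵀ = W₁ * W₁ᵀ := by rw [transpose_mul, transpose_transpose]
  refine ⟨by simpa only [Ak, hW₁sym] using exists_tprodM_min_of_mul_mul hM Q₁ Q₁ᵀ _ W₁ W₁ᵀ,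
    fun U S V hA => ?_⟩
  have hAk : ∀ i, mode3 Ak Zᵀ i =
      if (i : ℕ) < k₃ then Q₁ * Q₁ᵀ * mode3 A Zᵀ i * (W₁ * W₁ᵀ) else 0 := fun i => by
    rw [← hW₁sym]
    exact mode3_mul_mode3_submatrix_castLE_mul ((mem_orthogonalGroup_iff' _ _).1 hZ) h₃ _ _ _ i
  refine tnorm_le_tnorm_of_frobSq_mode3_le (by rwa [transpose_transpose]) fun i => ?_
  have hsvd := hA.isSVD_mode3 hM i
  rw [mode3_sub, mode3_sub, mode3_truncTensor hM, hAk]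
  split_ifs
  · exact hsvd.frobSq_sub_truncSlice_le_sub_proj hQ₁ hW₁
  · rw [sub_zero]
    exact hsvd.frobSq_sub_truncSlice_le _
end
end

section
/- (A circulant-structured tensor has t-rank 1 under the DFT transform.) Let n be a positive integer, ω := Complex.exp(2 π Complex.I / n), and let F : Matrix (ZMod n) (ZMod n) ℂ be the DFT matrix, F j k := ω ^ (j.val * k.val). Let U : Matrix (ZMod n) (ZMod n) ℂ be arbitrary and let c_1, …, c_p : ZMod n → ℂ. Let A be the n×p×n tensor (slices indexed by ZMod n) whose j-th lateral slice is the twist of U * Matrix.circulant (c_j), i.e. (A i) a j = (U * Matrix.circulant (c_j)) a i. Then for every i, the matrix rank of the transform-domain frontal slice (A ×₃ F) i is at most 1. -/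
open scoped BigOperators ComplexConjugate Matrix

noncomputable section

variable {R : Type*}

/-- a circulant-structured tensor has t-rank 1 under the DFT transform:
every transform-domain frontal slice of the tensor with lateral slices
`twist (U * circulant (c_j))` has matrix rank at most 1. -/
theorem stmt18 (n : ℕ) [NeZero n] (p : ℕ)
    (U : Matrix (ZMod n) (ZMod n) ℂ) (c : Fin p → ZMod n → ℂ) (i : ZMod n) :
    Matrix.rank
      (mode3
        (fun i => Matrix.of fun (a : ZMod n) (j : Fin p) => (U * Matrix.circulant (c j)) a i)
        (Matrix.of fun j k : ZMod n =>
          Complex.exp (2 * (Real.pi : ℂ) * Complex.I / (n : ℂ)) ^ (j.val * k.val))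
        i) ≤ 1 := by
  set ω : ℂ := Complex.exp (2 * (Real.pi : ℂ) * Complex.I / (n : ℂ)) with hωdef
  have hn : (n : ℂ) ≠ 0 := Nat.cast_ne_zero.mpr (NeZero.ne n)
  have hω : ω ^ n = 1 := by
    rw [hωdef, ← Complex.exp_nat_mul]
    rw [show (n : ℂ) * (2 * (Real.pi : ℂ) * Complex.I / (n : ℂ)) = 2 * Real.pi * Complex.I by
      field_simp]
    exact Complex.exp_two_pi_mul_I
  have hpow : ∀ a : ℕ, ω ^ a = ω ^ (a % n) := fun a => pow_eq_pow_mod a hω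
  set χ : ZMod n → ℂ := fun x => ω ^ x.val with hχdef
  have hχ_add : ∀ x y : ZMod n, χ (x + y) = χ x * χ y := by
    intro x y
    simp only [hχdef, ZMod.val_add, ← hpow, ← pow_add]
  have hmul : ∀ x y : ZMod n, ω ^ (x.val * y.val) = χ (x * y) := by
    intro x y
    simp only [hχdef, ZMod.val_mul, ← hpow]
  set u : ZMod n → ℂ := fun a => ∑ b, U a b * χ (i * b)
  set v : Fin p → ℂ := fun j => ∑ t, χ (-(i * t)) * c j t
  have hM : (mode3
        (fun i => Matrix.of fun (a : ZMod n) (j : Fin p) => (U * Matrix.circulant (c j)) a i)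
        (Matrix.of fun j k : ZMod n => ω ^ (j.val * k.val)) i)
      = Matrix.replicateCol (Fin 1) u * Matrix.replicateRow (Fin 1) v := by
    ext a j
    simp only [mode3, Matrix.sum_apply, Matrix.smul_apply, Matrix.of_apply, smul_eq_mul,
      Matrix.mul_apply, Matrix.replicateCol_apply, Matrix.replicateRow_apply, Matrix.circulant_apply,
      Finset.univ_unique, Finset.sum_singleton]
    calc ∑ k : ZMod n, ω ^ (i.val * k.val) * ∑ b, U a b * c j (b - k)
        = ∑ b, U a b * ∑ k : ZMod n, χ (i * k) * c j (b - k) := by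
          simp only [hmul, Finset.mul_sum, Finset.sum_mul]
          rw [Finset.sum_comm]
          congr 1; ext b; congr 1; ext k; ring
      _ = ∑ b, U a b * (χ (i * b) * v j) := by
          congr 1; ext b; congr 1
          rw [← Equiv.sum_comp (Equiv.subLeft b) (fun k => χ (i * k) * c j (b - k))]
          simp only [Equiv.subLeft_apply, sub_sub_cancel, v, Finset.mul_sum]
          congr 1; ext t
          rw [show i * (b - t) = i * b + -(i * t) by ring, hχ_add]
          ring
      _ = u a * v j := by
          simp only [u, Finset.sum_mul]
          congr 1; ext b; ring
  rw [hM]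
  exact (Matrix.rank_mul_le_left _ _).trans
    ((Matrix.rank_le_card_width _).trans (by simp))
end
end

section
/- (Incompressibility of the matricization of a t-rank-1 circulant tensor.) Let n be a positive integer, let U ∈ Matrix.unitaryGroup (ZMod n) ℂ, and let c_1, …, c_p : ZMod n → ℂ be an orthonormal family (∑_s (c_i s) · conj(c_j s) = 1 if i = j and 0 otherwise), so p ≤ n. Let 𝐀 : Matrix (ZMod n × ZMod n) (Fin p) ℂ be the matrix whose j-th column is the vectorization of U * Matrix.circulant (c_j), i.e. 𝐀 (a,i) j = (U * Matrix.circulant (c_j)) a i. Then for every natural number k ≤ p and every matrix B : Matrix (ZMod n × ZMod n) (Fin p) ℂ with rank B ≤ k, one has ‖𝐀 − B‖_F² ≥ (p − k) · n, and there exists such a B with rank B ≤ k attaining ‖𝐀 − B‖_F² = (p − k) · n. -/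
open scoped BigOperators ComplexConjugate Matrix

noncomputable section

variable {R : Type*}

/-! The columns of `𝐀` are pairwise orthogonal with squared norm `n`: unitarity of `U` drops out
of the Frobenius inner products, and the Frobenius inner product of two circulants is `n` times
that of their generating vectors. So `𝐀ᴴ𝐀 = n • 1`. If `rank B ≤ k`, the kernel of `B` has
dimension at least `p - k`; on it `𝐀 - B` acts as `𝐀`, which multiplies norms by `√n`, and
Bessel's inequality applied to the rows of `𝐀 - B` turns this into `‖𝐀 - B‖² ≥ (p - k) n`.
Zeroing all but `k` columns of `𝐀` attains the bound. -/

section Frobenius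

variable {𝕜 : Type*} [RCLike 𝕜] {m ι : Type*} [Fintype m] [Fintype ι]

lemma fnorm_sq_s19 (A : Matrix m ι 𝕜) : fnorm A ^ 2 = ∑ a, ∑ j, ‖A a j‖ ^ 2 :=
  Real.sq_sqrt (by positivity)

lemma ofReal_sum_norm_sq (v : ι → 𝕜) : ((∑ i, ‖v i‖ ^ 2 : ℝ) : 𝕜) = star v ⬝ᵥ v := by
  simp [dotProduct, RCLike.conj_mul]

lemma sum_norm_sq_mulVec_of_conjTranspose_mul_self [DecidableEq ι] {A : Matrix m ι 𝕜} {c : ℝ}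
    (hA : Aᴴ * A = (c : 𝕜) • 1) (x : ι → 𝕜) :
    ∑ a, ‖(A *ᵥ x) a‖ ^ 2 = c * ∑ j, ‖x j‖ ^ 2 := by
  apply RCLike.ofReal_injective (K := 𝕜)
  rw [RCLike.ofReal_mul, ofReal_sum_norm_sq, ofReal_sum_norm_sq, Matrix.star_mulVec,
    ← Matrix.dotProduct_mulVec, Matrix.mulVec_mulVec, hA, Matrix.smul_mulVec,
    Matrix.one_mulVec, dotProduct_smul, smul_eq_mul]

lemma sum_norm_sq_mulVec_orthonormal_le_fnorm_sq {d : Type*} [Fintype d] (M : Matrix m ι 𝕜)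
    {u : d → EuclideanSpace 𝕜 ι} (hu : Orthonormal 𝕜 u) :
    ∑ t, ∑ a, ‖(M *ᵥ u t) a‖ ^ 2 ≤ fnorm M ^ 2 := by
  rw [fnorm_sq_s19, Finset.sum_comm]
  refine Finset.sum_le_sum fun a _ => ?_
  let r : EuclideanSpace 𝕜 ι := WithLp.toLp 2 (star (M a))
  have hrow : ∀ t, (M *ᵥ u t) a = inner 𝕜 r (u t) := fun t => by
    rw [EuclideanSpace.inner_eq_star_dotProduct, star_star, dotProduct_comm]; rfl
  calc ∑ t, ‖(M *ᵥ u t) a‖ ^ 2 = ∑ t, ‖inner 𝕜 (u t) r‖ ^ 2 := by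
        simp only [hrow, norm_inner_symm]
    _ ≤ ‖r‖ ^ 2 := hu.sum_inner_products_le r
    _ = ∑ j, ‖M a j‖ ^ 2 := by simp [r, EuclideanSpace.norm_sq_eq]

end Frobenius

section LowRankApproximation

open Module

lemma Matrix.rank_add_finrank_ker_toLpLin {K m n : Type*} [Field K] [Fintype m] [Fintype n]
    [DecidableEq n] (p q : ENNReal) (B : Matrix m n K) :
    B.rank + finrank K (LinearMap.ker (Matrix.toLpLin p q B)) = Fintype.card n := by
  rw [B.rank_eq_finrank_range_toLin (PiLp.basisFun q K m) (PiLp.basisFun p K n),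
    ← Matrix.toLpLin_eq_toLin, LinearMap.finrank_range_add_finrank_ker,
    finrank_eq_card_basis (PiLp.basisFun p K n)]

variable {𝕜 : Type*} [RCLike 𝕜] {m ι : Type*} [Fintype m] [Fintype ι] [DecidableEq ι]

theorem le_fnorm_sub_sq_of_conjTranspose_mul_self {A B : Matrix m ι 𝕜} {c : ℝ}
    (hA : Aᴴ * A = (c : 𝕜) • 1) (hc : 0 ≤ c) {k : ℕ} (hB : B.rank ≤ k) :
    ((Fintype.card ι - k : ℕ) : ℝ) * c ≤ fnorm (A - B) ^ 2 := by
  set W := LinearMap.ker (Matrix.toLpLin 2 2 B)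
  let u := stdOrthonormalBasis 𝕜 W
  have hdim : Fintype.card ι - k ≤ finrank 𝕜 W := by
    have : B.rank + finrank 𝕜 W = _ := B.rank_add_finrank_ker_toLpLin 2 2
    omega
  have hu : Orthonormal 𝕜 fun t => (u t : EuclideanSpace 𝕜 ι) :=
    u.orthonormal.comp_linearIsometry W.subtypeₗᵢ
  have herr : ∀ t, ∑ a, ‖((A - B) *ᵥ (u t : EuclideanSpace 𝕜 ι)) a‖ ^ 2 = c := fun t => by
    have hker : B *ᵥ (u t : EuclideanSpace 𝕜 ι) = 0 := congrArg WithLp.ofLp (u t).2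
    rw [Matrix.sub_mulVec, hker, sub_zero, sum_norm_sq_mulVec_of_conjTranspose_mul_self hA,
      ← EuclideanSpace.norm_sq_eq, Submodule.norm_coe, u.orthonormal.1 t, one_pow, mul_one]
  calc ((Fintype.card ι - k : ℕ) : ℝ) * c ≤ finrank 𝕜 W * c := by gcongr
    _ = ∑ t, ∑ a, ‖((A - B) *ᵥ (u t : EuclideanSpace 𝕜 ι)) a‖ ^ 2 := by simp [herr]
    _ ≤ fnorm (A - B) ^ 2 := sum_norm_sq_mulVec_orthonormal_le_fnorm_sq _ hu

theorem exists_rank_le_fnorm_sub_sq_eq_of_conjTranspose_mul_self {A : Matrix m ι 𝕜} {c : ℝ}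
    (hA : Aᴴ * A = (c : 𝕜) • 1) (s : Finset ι) :
    ∃ B : Matrix m ι 𝕜, B.rank ≤ s.card ∧
      fnorm (A - B) ^ 2 = ((Fintype.card ι - s.card : ℕ) : ℝ) * c := by
  classical
  set D : Matrix ι ι 𝕜 := Matrix.diagonal fun j => if j ∈ s then 1 else 0
  refine ⟨A * D, (Matrix.rank_mul_le_right _ _).trans ?_, ?_⟩
  · simp [D, Matrix.rank_diagonal, Fintype.card_subtype]
  have hcol : ∀ j, ∑ a, ‖A a j‖ ^ 2 = c := fun j => by
    simpa [Matrix.mulVec_single_one, Pi.single_apply, apply_ite] using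
      sum_norm_sq_mulVec_of_conjTranspose_mul_self hA (Pi.single j 1)
  have herr : ∀ j, ∑ a, ‖(A - A * D) a j‖ ^ 2 = if j ∈ s then 0 else c := fun j => by
    by_cases hj : j ∈ s <;> simp [D, Matrix.mul_diagonal, hj, hcol]
  rw [fnorm_sq_s19, Finset.sum_comm, Finset.sum_congr rfl fun j _ => herr j, Finset.sum_ite,
    Finset.sum_const_zero, zero_add, Finset.sum_const, nsmul_eq_mul, Finset.filter_not,
    Finset.filter_mem_eq_inter, Finset.univ_inter, Finset.card_univ_sdiff]

end LowRankApproximation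

section Circulant

variable {α : Type*} [CommSemiring α] [StarRing α]

lemma Matrix.trace_conjTranspose_mul {m n : Type*} [Fintype m] [Fintype n] (X Y : Matrix m n α) :
    (Xᴴ * Y).trace = ∑ a, ∑ b, star (X a b) * Y a b := by
  simp only [Matrix.trace, Matrix.diag, Matrix.mul_apply, Matrix.conjTranspose_apply]
  exact Finset.sum_comm

lemma Matrix.trace_conjTranspose_mul_of_mem_unitaryGroup {β n : Type*} [CommRing β] [StarRing β]
    [Fintype n] [DecidableEq n] {U : Matrix n n β} (hU : U ∈ Matrix.unitaryGroup n β)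
    (X Y : Matrix n n β) :
    ((U * X)ᴴ * (U * Y)).trace = (Xᴴ * Y).trace := by
  have hUU : Uᴴ * U = 1 := (Matrix.mem_unitaryGroup_iff').1 hU
  rw [Matrix.conjTranspose_mul, Matrix.mul_assoc, ← Matrix.mul_assoc Uᴴ, hUU, Matrix.one_mul]

lemma Matrix.trace_conjTranspose_circulant_mul_circulant {n : Type*} [AddGroup n] [Fintype n]
    (v w : n → α) :
    ((Matrix.circulant v)ᴴ * Matrix.circulant w).trace =
      Fintype.card n • ∑ s, star (v s) * w s := by
  rw [Matrix.trace_conjTranspose_mul, Finset.sum_comm, ← Finset.card_univ, ← Finset.sum_const]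
  refine Finset.sum_congr rfl fun b _ => ?_
  simpa only [Matrix.circulant_apply, Equiv.subRight_apply] using
    Equiv.sum_comp (Equiv.subRight b) fun s => star (v s) * w s

lemma conjTranspose_mul_self_vec_apply {ι m n : Type*} [Fintype m] [Fintype n]
    (M : ι → Matrix m n α) (i j : ι) :
    ((Matrix.of fun (ab : m × n) l => M l ab.1 ab.2)ᴴ *
      Matrix.of fun (ab : m × n) l => M l ab.1 ab.2) i j = ((M i)ᴴ * M j).trace := by
  rw [Matrix.trace_conjTranspose_mul, Matrix.mul_apply, Fintype.sum_prod_type]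
  rfl

lemma conjTranspose_mul_self_vec_unitary_mul_circulant {𝕜 G ι : Type*} [RCLike 𝕜] [AddGroup G]
    [Fintype G] [DecidableEq G] [DecidableEq ι] {U : Matrix G G 𝕜}
    (hU : U ∈ Matrix.unitaryGroup G 𝕜) {c : ι → G → 𝕜}
    (horth : ∀ i j, ∑ s, c i s * starRingEnd 𝕜 (c j s) = if i = j then 1 else 0) :
    (Matrix.of fun (ab : G × G) j => (U * Matrix.circulant (c j)) ab.1 ab.2)ᴴ *
      (Matrix.of fun (ab : G × G) j => (U * Matrix.circulant (c j)) ab.1 ab.2) =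
      ((Fintype.card G : ℝ) : 𝕜) • 1 := by
  ext i j
  refine (conjTranspose_mul_self_vec_apply (fun j => U * Matrix.circulant (c j)) i j).trans ?_
  have hcij : ∑ s, star (c i s) * c j s = if i = j then 1 else 0 := by
    simpa only [mul_comm, eq_comm (a := j), RCLike.star_def] using horth j i
  rw [Matrix.trace_conjTranspose_mul_of_mem_unitaryGroup hU,
    Matrix.trace_conjTranspose_circulant_mul_circulant, hcij]
  simp [Matrix.one_apply]

end Circulant

/-- incompressibility of the matricization of a t-rank-1 circulant tensor:
for `U` unitary and `c_1,…,c_p` orthonormal, every rank-≤k approximation `B` of the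
matricization `𝐀` (with columns `vec (U * circulant (c_j))`) has squared error at least
`(p−k)·n`, and this bound is attained. -/
theorem stmt19 (n : ℕ) [NeZero n] (p : ℕ)
    (U : Matrix (ZMod n) (ZMod n) ℂ) (hU : U ∈ Matrix.unitaryGroup (ZMod n) ℂ)
    (c : Fin p → ZMod n → ℂ)
    (horth : ∀ i j : Fin p,
      (∑ s, c i s * starRingEnd ℂ (c j s)) = if i = j then 1 else 0)
    (k : ℕ) (hk : k ≤ p) :
    (∀ B : Matrix (ZMod n × ZMod n) (Fin p) ℂ, Matrix.rank B ≤ k →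
      ((p - k : ℕ) : ℝ) * (n : ℝ) ≤
        fnorm ((Matrix.of fun (ai : ZMod n × ZMod n) (j : Fin p) =>
          (U * Matrix.circulant (c j)) ai.1 ai.2) - B) ^ 2) ∧
    ∃ B : Matrix (ZMod n × ZMod n) (Fin p) ℂ, Matrix.rank B ≤ k ∧
      fnorm ((Matrix.of fun (ai : ZMod n × ZMod n) (j : Fin p) =>
        (U * Matrix.circulant (c j)) ai.1 ai.2) - B) ^ 2 = ((p - k : ℕ) : ℝ) * (n : ℝ) := by
  have hgram := conjTranspose_mul_self_vec_unitary_mul_circulant hU horth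
  rw [ZMod.card] at hgram
  refine ⟨fun B hB => ?_, ?_⟩
  · simpa only [Fintype.card_fin] using
      le_fnorm_sub_sq_of_conjTranspose_mul_self (c := n) hgram n.cast_nonneg hB
  obtain ⟨s, -, hs⟩ := Finset.exists_subset_card_eq (s := (Finset.univ : Finset (Fin p)))
    (by simpa using hk)
  obtain ⟨B, hB, hAB⟩ := exists_rank_le_fnorm_sub_sq_eq_of_conjTranspose_mul_self (c := n) hgram s
  exact ⟨B, hs ▸ hB, by rw [hAB, hs, Fintype.card_fin]⟩
end
end
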